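/- Let C \subseteq F_2^n be an orthogonal array of strength \tau and cardinality M, let y \in F_2^n, and let w_i(y) = |\{x \in C : d(x,y) = i\}|. Then for any real polynomial f of degree at most \tau with Krawtchouk expansion f(t) = f_0 + \sum_{j=1}^{\tau} f_j Q_j(t), one has \sum_{i=0}^n w_i(y) f(t_{n-i}) = f_0 M, where t_m = -1 + 2m/n. -/

import Mathlib

noncomputable def rchoose (z : ℝ) (j : ℕ) : ℝ :=
  (∏ t ∈ Finset.range j, (z - t)) / (Nat.factorial j)

/-- Binary Krawtchouk polynomial `K_i^{(n)}(z)`. -/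
noncomputable def Kr (n i : ℕ) (z : ℝ) : ℝ :=
  ∑ j ∈ Finset.range (i + 1), (-1 : ℝ) ^ j * rchoose z j * rchoose ((n : ℝ) - z) (i - j)

/-- Normalized Krawtchouk polynomial `Q_i(t) = K_i^{(n)}(n(1-t)/2)/binom(n,i)`. -/
noncomputable def Qn (n i : ℕ) (t : ℝ) : ℝ :=
  Kr n i ((n : ℝ) * (1 - t) / 2) / (n.choose i : ℝ)

/-- The point `t_m = -1 + 2m/n`. -/
noncomputable def tpt (n m : ℕ) : ℝ := -1 + 2 * (m : ℝ) / (n : ℝ)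

/-- Integral of `f` with respect to the measure `μ_n = 2^{-n} ∑ binom(n,i) δ_{t_i}`. -/
noncomputable def muInt (n : ℕ) (f : ℝ → ℝ) : ℝ :=
  ((2 : ℝ) ^ n)⁻¹ * ∑ i ∈ Finset.range (n + 1), (n.choose i : ℝ) * f (tpt n i)
/-- `C` is a binary orthogonal array of length `n` and strength `τ`: every projection
onto `τ` coordinates takes each value equally often. -/
def IsOA (n τ : ℕ) (C : Finset (Fin n → ZMod 2)) : Prop :=
  ∀ S : Finset (Fin n), S.card = τ → ∀ v : Fin n → ZMod 2,
    (C.filter fun x => ∀ i ∈ S, x i = v i).card * 2 ^ τ = C.card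

/-- `⟨x,y⟩ = 1 - 2 d(x,y)/n`. -/
noncomputable def inn (n : ℕ) (x y : Fin n → ZMod 2) : ℝ :=
  1 - 2 * (hammingDist x y : ℝ) / (n : ℝ)

/-- Covering radius `ρ(C) = min_y max_{x ∈ C} ⟨x,y⟩`. -/
noncomputable def covRad (n : ℕ) (C : Finset (Fin n → ZMod 2)) (hC : C.Nonempty) : ℝ :=
  Finset.univ.inf' Finset.univ_nonempty (fun y => C.sup' hC fun x => inn n x y)

/-!
Expanding over the Walsh characters `χ_S(x) = (-1)^{∑_{i ∈ S} x_i}` of `(ZMod 2)^n` gives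
`K_j(d(x, y)) = ∑_{|S| = j} χ_S(x) χ_S(y)`. For `1 ≤ |S| ≤ τ`, the character `χ_S` only reads
the coordinates of a `τ`-set `T ⊇ S`, on which an orthogonal array of strength `τ` is uniformly
distributed; so `∑_{x ∈ C} χ_S(x)` is `|C| / 2^τ` times the sum of a nontrivial character over
`(ZMod 2)^T`, which vanishes. Hence `∑_{x ∈ C} K_j(d(x, y)) = 0` for `1 ≤ j ≤ τ`, and only the
`f_0` term survives.
-/

open Finset

theorem rchoose_natCast (m j : ℕ) : rchoose m j = m.choose j := by
  rw [rchoose, ← descPochhammer_eval_eq_prod_range, descPochhammer_eval_eq_descFactorial,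
    Nat.descFactorial_eq_factorial_mul_choose]
  push_cast
  field_simp

theorem Kr_zero (n : ℕ) (z : ℝ) : Kr n 0 z = 1 := by
  simp [Kr, rchoose]

theorem Kr_natCast {n d : ℕ} (hd : d ≤ n) (j : ℕ) :
    Kr n j d = ∑ t ∈ range (j + 1), (-1) ^ t * (d.choose t : ℝ) * ((n - d).choose (j - t) : ℝ) := by
  rw [Kr, ← Nat.cast_sub hd]
  simp only [rchoose_natCast]

theorem card_filter_powersetCard_card_inter {α : Type*} [DecidableEq α] {s D : Finset α}
    (hD : D ⊆ s) {j t : ℕ} (ht : t ≤ j) :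
    #{S ∈ powersetCard j s | #(S ∩ D) = t} = (#D).choose t * (#s - #D).choose (j - t) := by
  rw [← card_sdiff_of_subset hD, ← card_powersetCard, ← card_powersetCard, ← card_product]
  symm
  apply card_nbij' (fun p => p.1 ∪ p.2) (fun S => (S ∩ D, S \ D))
  · rintro ⟨A, B⟩ hAB
    simp only [coe_product, Set.mem_prod, mem_coe, mem_powersetCard, coe_filter] at hAB ⊢
    obtain ⟨⟨hA, rfl⟩, hB, hBcard⟩ := hAB
    have hdisj : Disjoint A B :=
      disjoint_of_subset_left hA (disjoint_of_subset_right hB disjoint_sdiff)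
    have hinter : (A ∪ B) ∩ D = A := by grind
    refine ⟨⟨union_subset (hA.trans hD) (hB.trans sdiff_subset), ?_⟩, by rw [hinter]⟩
    rw [card_union_of_disjoint hdisj]
    omega
  · intro S hS
    simp only [coe_product, Set.mem_prod, mem_coe, mem_powersetCard, coe_filter] at hS ⊢
    obtain ⟨⟨hS, rfl⟩, hSD⟩ := hS
    refine ⟨⟨inter_subset_right, hSD⟩, sdiff_subset_sdiff hS subset_rfl, ?_⟩
    have := card_inter_add_card_sdiff S D
    omega
  · rintro ⟨A, B⟩ hAB
    simp only [coe_product, Set.mem_prod, mem_coe, mem_powersetCard] at hAB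
    obtain ⟨⟨hA, -⟩, hB, -⟩ := hAB
    exact Prod.ext (by grind) (by grind)
  · intro S _
    exact sup_inf_sdiff S D

theorem sum_powersetCard_neg_one_pow_card_inter {α : Type*} [DecidableEq α] {s D : Finset α}
    (hD : D ⊆ s) (j : ℕ) :
    ∑ S ∈ powersetCard j s, (-1 : ℝ) ^ #(S ∩ D)
      = ∑ t ∈ range (j + 1), (-1) ^ t * ((#D).choose t : ℝ) * ((#s - #D).choose (j - t) : ℝ) := by
  have hmaps : ∀ S ∈ powersetCard j s, #(S ∩ D) ∈ range (j + 1) := fun S hS => by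
    rw [mem_range, Nat.lt_succ_iff, ← (mem_powersetCard.mp hS).2]
    exact card_le_card inter_subset_left
  rw [← sum_fiberwise_of_maps_to hmaps]
  refine sum_congr rfl fun t ht => ?_
  rw [sum_congr rfl fun S hS => by rw [(mem_filter.mp hS).2], sum_const, nsmul_eq_mul,
    card_filter_powersetCard_card_inter hD (Nat.lt_succ_iff.mp (mem_range.mp ht))]
  push_cast
  ring

noncomputable def walsh {ι : Type*} (S : Finset ι) : AddChar (ι → ZMod 2) ℝ :=
  ∏ i ∈ S, (AddChar.zmodChar 2 (by norm_num : (-1 : ℝ) ^ 2 = 1)).compAddMonoidHom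
    (Pi.evalAddMonoidHom (fun _ => ZMod 2) i)

theorem walsh_apply {ι : Type*} (S : Finset ι) (x : ι → ZMod 2) :
    walsh S x = ∏ i ∈ S, (-1 : ℝ) ^ (x i).val := by
  simp [walsh, AddChar.prod_apply, AddChar.zmodChar_apply]

theorem walsh_add_eq_neg_one_pow {ι : Type*} [Fintype ι] [DecidableEq ι] (S : Finset ι)
    (x y : ι → ZMod 2) : walsh S (x + y) = (-1) ^ #(S ∩ ({i | x i ≠ y i} : Finset ι)) := by
  have hval : ∀ a b : ZMod 2, (a + b).val = if a ≠ b then 1 else 0 := by decide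
  simp only [walsh_apply, Pi.add_apply, hval, prod_pow_eq_pow_sum, sum_boole, Nat.cast_id]
  congr 2
  ext
  simp

theorem sum_walsh_eq_zero {ι : Type*} [Fintype ι] [DecidableEq ι] {S : Finset ι}
    (hS : S.Nonempty) : ∑ x, walsh S x = 0 := by
  obtain ⟨i₀, hi₀⟩ := hS
  refine AddChar.sum_eq_zero_iff_ne_zero.mpr (AddChar.ne_zero_iff.mpr ⟨Pi.single i₀ 1, ?_⟩)
  rw [walsh_apply, prod_eq_single_of_mem i₀ hi₀ fun i _ hi => by simp [hi], Pi.single_eq_same,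
    show (1 : ZMod 2).val = 1 from rfl]
  norm_num

theorem Kr_hammingDist {n : ℕ} (x y : Fin n → ZMod 2) (j : ℕ) :
    Kr n j (hammingDist x y) = ∑ S ∈ powersetCard j univ, walsh S x * walsh S y := by
  have hD : hammingDist x y = #({i | x i ≠ y i} : Finset (Fin n)) := rfl
  have hDn := card_le_univ ({i | x i ≠ y i} : Finset (Fin n))
  rw [Fintype.card_fin] at hDn
  simp_rw [← AddChar.map_add_eq_mul, walsh_add_eq_neg_one_pow]
  rw [sum_powersetCard_neg_one_pow_card_inter (subset_univ _), hD, Kr_natCast hDn, card_univ,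
    Fintype.card_fin]

section OrthogonalArray

variable {n τ : ℕ} {C : Finset (Fin n → ZMod 2)}

theorem IsOA.card_filter_restrict_mul (hOA : IsOA n τ C) {T : Finset (Fin n)} (hT : #T = τ)
    (v : T → ZMod 2) :
    #{x ∈ C | (fun i : T => x i) = v} * 2 ^ τ = #C := by
  convert hOA T hT fun i => if h : i ∈ T then v ⟨i, h⟩ else 0 using 4 with x
  simp only [funext_iff, Subtype.forall]
  constructor <;> intro h i hi <;> simpa [hi] using h i hi

theorem IsOA.sum_comp_restrict (hOA : IsOA n τ C) {T : Finset (Fin n)} (hT : #T = τ)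
    (G : (T → ZMod 2) → ℝ) :
    (∑ x ∈ C, G fun i : T => x i) * 2 ^ τ = #C * ∑ v, G v := by
  rw [← sum_fiberwise' C (fun x (i : T) => x i), sum_mul, mul_sum]
  refine sum_congr rfl fun v _ => ?_
  rw [sum_const, nsmul_eq_mul, mul_right_comm]
  exact_mod_cast congrArg (fun k : ℕ => (k : ℝ) * G v) (hOA.card_filter_restrict_mul hT v)

theorem IsOA.sum_walsh_eq_zero (hOA : IsOA n τ C) (hτ : τ ≤ n) {S : Finset (Fin n)}
    (hS : S.Nonempty) (hSτ : #S ≤ τ) : ∑ x ∈ C, walsh S x = 0 := by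
  obtain ⟨T, hST, -, hT⟩ :=
    exists_subsuperset_card_eq (subset_univ S) hSτ (by simpa using hτ)
  have hrestrict : ∀ x, walsh S x = walsh (S.subtype (· ∈ T)) fun i : T => x i := fun x => by
    rw [walsh_apply, walsh_apply, prod_subtype_eq_prod_filter (fun i => (-1 : ℝ) ^ (x i).val),
      filter_true_of_mem hST]
  have hST_nonempty : (S.subtype (· ∈ T)).Nonempty := by
    obtain ⟨i, hi⟩ := hS
    exact ⟨⟨i, hST hi⟩, mem_subtype.mpr hi⟩
  have := hOA.sum_comp_restrict hT (walsh (S.subtype (· ∈ T)))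
  rw [_root_.sum_walsh_eq_zero hST_nonempty, mul_zero] at this
  simp_rw [hrestrict]
  exact (mul_eq_zero.mp this).resolve_right (by positivity)

theorem IsOA.sum_Kr_hammingDist_eq_zero (hOA : IsOA n τ C) (hτ : τ ≤ n) (y : Fin n → ZMod 2)
    {j : ℕ} (hj : j ≠ 0) (hjτ : j ≤ τ) :
    ∑ x ∈ C, Kr n j (hammingDist x y) = 0 := by
  simp_rw [Kr_hammingDist]
  rw [sum_comm]
  refine sum_eq_zero fun S hS => ?_
  rw [mem_powersetCard] at hS
  rw [← sum_mul, hOA.sum_walsh_eq_zero hτ (card_ne_zero.mp (hS.2 ▸ hj)) (hS.2 ▸ hjτ), zero_mul]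

end OrthogonalArray

theorem hammingDist_le_card_fin {n : ℕ} {β : Type*} [DecidableEq β] (x y : Fin n → β) :
    hammingDist x y ≤ n :=
  hammingDist_le_card_fintype.trans_eq (Fintype.card_fin n)

theorem sum_card_filter_hammingDist_mul {n : ℕ} {β : Type*} [DecidableEq β]
    (C : Finset (Fin n → β)) (y : Fin n → β) (g : ℕ → ℝ) :
    ∑ i ∈ range (n + 1), #{x ∈ C | hammingDist x y = i} * g i = ∑ x ∈ C, g (hammingDist x y) := by
  have hmaps : ∀ x ∈ C, hammingDist x y ∈ range (n + 1) := fun x _ =>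
    mem_range_succ_iff.mpr (hammingDist_le_card_fin x y)
  rw [← sum_fiberwise_of_maps_to hmaps]
  refine sum_congr rfl fun i _ => ?_
  rw [sum_congr rfl fun x hx => by rw [(mem_filter.mp hx).2], sum_const, nsmul_eq_mul]

theorem Qn_tpt_sub {n i : ℕ} (hi : i ≤ n) (j : ℕ) :
    Qn n j (tpt n (n - i)) = Kr n j i / n.choose j := by
  rw [Qn, tpt]
  congr 2
  rcases eq_or_ne n 0 with rfl | hn
  · simp [Nat.le_zero.mp hi]
  · rw [Nat.cast_sub hi]
    field_simp
    ring

theorem oa_distance_distribution_identity_general (n τ : ℕ) (hτ : τ ≤ n)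
    (C : Finset (Fin n → ZMod 2)) (hOA : IsOA n τ C) (y : Fin n → ZMod 2)
    (f : ℕ → ℝ) :
    ∑ i ∈ Finset.range (n + 1),
        ((C.filter fun x => hammingDist x y = i).card : ℝ) *
          (∑ j ∈ Finset.range (τ + 1), f j * Qn n j (tpt n (n - i)))
      = f 0 * (C.card : ℝ) := by
  rw [sum_card_filter_hammingDist_mul C y]
  simp_rw [Qn_tpt_sub (hammingDist_le_card_fin _ y)]
  calc ∑ x ∈ C, ∑ j ∈ range (τ + 1), f j * (Kr n j (hammingDist x y) / n.choose j)
      = ∑ j ∈ range (τ + 1), f j / n.choose j * ∑ x ∈ C, Kr n j (hammingDist x y) := by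
        rw [sum_comm]
        simp_rw [mul_sum, mul_div, div_mul_eq_mul_div]
    _ = f 0 * #C := by
        rw [sum_range_succ', sum_eq_zero fun j hj => by
          rw [hOA.sum_Kr_hammingDist_eq_zero hτ y j.succ_ne_zero (mem_range.mp hj), mul_zero]]
        simp [Kr_zero]

/-- Delsarte's identity: for an orthogonal array of strength `τ`, the distance
distribution with respect to any point `y` satisfies
`∑ w_i(y) f(t_{n-i}) = f_0 |C|` for polynomials of degree at most `τ` given in the
Krawtchouk basis. -/
theorem oa_distance_distribution_identity (n τ : ℕ) (hn : 1 ≤ n) (hτ : τ ≤ n)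
    (C : Finset (Fin n → ZMod 2)) (hOA : IsOA n τ C) (y : Fin n → ZMod 2)
    (f : ℕ → ℝ) :
    ∑ i ∈ Finset.range (n + 1),
        ((C.filter fun x => hammingDist x y = i).card : ℝ) *
          (∑ j ∈ Finset.range (τ + 1), f j * Qn n j (tpt n (n - i)))
      = f 0 * (C.card : ℝ) :=
  oa_distance_distribution_identity_general n τ hτ C hOA y f
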